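/- Let s ∈ (0,1). For every x > 0, Re[ (i/π) ∫_{0}^{∞} exp(−x r − e^{iπs} r^s) dr ] = (1/π) Σ_{j=1}^{∞} (−1)^{j−1} (Γ(sj+1) sin(πsj)/j!) · x^{−(sj+1)}, where the series on the right converges absolutely. -/

import Mathlib

/-!
Expand `exp (-c r ^ s)`, `c = e^{iπs}`, in its power series. Against `e^{-xr}` the `n`-th term
integrates to `(-c)^n Γ(sn+1) x^{-(sn+1)} / n!`. Log-convexity of `Γ` gives
`Γ(t+s) ≤ t^s Γ(t)`, so for `s < 1` the ratio of consecutive terms of `Γ(sn+1)/n!` is at most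
`(n+1)^{s-1} → 0`; hence the integrals of the absolute values are summable, and sum and
integral may be interchanged. Finally `Re (i (-e^{iπs})^n) = (-1)^{n+1} sin(πsn)`, which
vanishes at `n = 0`.
-/

open MeasureTheory Real Set Filter Nat Topology

theorem Real.Gamma_add_le_rpow_mul_Gamma {t a : ℝ} (ht : 0 < t) (ha0 : 0 < a) (ha1 : a < 1) :
    Gamma (t + a) ≤ t ^ a * Gamma t := by
  have h := Gamma_mul_add_mul_le_rpow_Gamma_mul_rpow_Gamma (by linarith : 0 < t + 1) ht ha0
    (by linarith : 0 < 1 - a) (by ring)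
  rwa [show a * (t + 1) + (1 - a) * t = t + a by ring, Gamma_add_one ht.ne',
    mul_rpow ht.le (Gamma_pos_of_pos ht).le, mul_assoc, ← rpow_add (Gamma_pos_of_pos ht),
    add_sub_cancel, rpow_one] at h

theorem Real.Gamma_mul_succ_add_one_div_factorial_le {s : ℝ} (hs0 : 0 < s) (hs1 : s < 1)
    (n : ℕ) : Gamma (s * ((n : ℝ) + 1) + 1) / (n + 1)! ≤
      ((n : ℝ) + 1) ^ (s - 1) * (Gamma (s * n + 1) / n !) := by
  have hGamma : Gamma (s * ((n : ℝ) + 1) + 1) ≤ ((n : ℝ) + 1) ^ s * Gamma (s * n + 1) :=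
    calc Gamma (s * ((n : ℝ) + 1) + 1) = Gamma ((s * n + 1) + s) := by ring_nf
      _ ≤ (s * n + 1) ^ s * Gamma (s * n + 1) :=
        Gamma_add_le_rpow_mul_Gamma (by positivity) hs0 hs1
      _ ≤ ((n : ℝ) + 1) ^ s * Gamma (s * n + 1) := by
        gcongr
        nlinarith [(Nat.cast_nonneg n : (0 : ℝ) ≤ n)]
  rw [rpow_sub_one (by positivity), factorial_succ, Nat.cast_mul, Nat.cast_succ]
  calc Gamma (s * ((n : ℝ) + 1) + 1) / ((n + 1) * n !)
      ≤ ((n : ℝ) + 1) ^ s * Gamma (s * n + 1) / ((n + 1) * n !) := by gcongr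
    _ = ((n : ℝ) + 1) ^ s / (n + 1) * (Gamma (s * n + 1) / n !) :=
      (div_mul_div_comm _ _ _ _).symm

theorem summable_Gamma_mul_add_one_div_factorial_mul_pow {s : ℝ} (hs0 : 0 < s) (hs1 : s < 1)
    (y : ℝ) : Summable fun n : ℕ => Gamma (s * n + 1) / n ! * y ^ n := by
  have hlim : Tendsto (fun n : ℕ => ((n : ℝ) + 1) ^ (s - 1) * |y|) atTop (𝓝 0) := by
    have := ((tendsto_rpow_neg_atTop (by linarith : 0 < 1 - s)).comp
      (tendsto_atTop_add_const_right _ 1 tendsto_natCast_atTop_atTop)).mul_const |y|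
    simpa [neg_sub] using this
  refine summable_of_ratio_norm_eventually_le (r := 1 / 2) (by norm_num) ?_
  filter_upwards [hlim.eventually_le_const (by norm_num : (0 : ℝ) < 1 / 2)] with n hn
  push_cast
  rw [norm_mul, norm_mul, norm_pow, norm_pow, pow_succ,
    Real.norm_of_nonneg (by positivity : 0 ≤ Gamma (s * n + 1) / n !),
    Real.norm_of_nonneg (by positivity : 0 ≤ Gamma (s * ((n : ℝ) + 1) + 1) / (n + 1)!)]
  calc Gamma (s * ((n : ℝ) + 1) + 1) / (n + 1)! * (‖y‖ ^ n * ‖y‖)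
      ≤ ((n : ℝ) + 1) ^ (s - 1) * (Gamma (s * n + 1) / n !) * (‖y‖ ^ n * ‖y‖) := by
        gcongr; exact Gamma_mul_succ_add_one_div_factorial_le hs0 hs1 n
    _ = (((n : ℝ) + 1) ^ (s - 1) * |y|) * (Gamma (s * n + 1) / n ! * ‖y‖ ^ n) := by
        rw [Real.norm_eq_abs]; ring
    _ ≤ 1 / 2 * (Gamma (s * n + 1) / n ! * ‖y‖ ^ n) := by gcongr

theorem Real.integral_rpow_mul_exp_neg_mul_Ioi_of_neg_one_lt {a x : ℝ} (ha : -1 < a)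
    (hx : 0 < x) :
    ∫ r in Ioi 0, r ^ a * exp (-(x * r)) = Gamma (a + 1) * x ^ (-(a + 1)) := by
  rw [← add_sub_cancel_right a 1, integral_rpow_mul_exp_neg_mul_Ioi (by linarith) hx,
    add_sub_cancel_right, one_div, inv_rpow hx.le, ← rpow_neg hx.le, mul_comm]

theorem Real.integrableOn_rpow_mul_exp_neg_mul {a x : ℝ} (ha : -1 < a) (hx : 0 < x) :
    IntegrableOn (fun r : ℝ => r ^ a * exp (-(x * r))) (Ioi 0) := by
  simpa [rpow_one] using integrableOn_rpow_mul_exp_neg_mul_rpow ha one_pos hx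

theorem Real.rpow_neg_mul_add_one {x : ℝ} (hx : 0 < x) (s : ℝ) (n : ℕ) :
    x ^ (-(s * n + 1)) = x⁻¹ * (x ^ (-s)) ^ n := by
  rw [← rpow_mul_natCast hx.le, ← rpow_neg_one, ← rpow_add hx]
  ring_nf

theorem Complex.re_I_mul_neg_exp_pow (θ : ℝ) (n : ℕ) :
    (I * (-exp (I * θ)) ^ n).re = -((-1) ^ n * Real.sin (θ * n)) := by
  have hexp : (-exp (I * θ)) ^ n = ((-1 : ℝ) ^ n : ℝ) * exp (((θ * n : ℝ) : ℂ) * I) := by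
    rw [neg_pow, ← exp_nat_mul]
    push_cast
    ring_nf
  rw [hexp, exp_mul_I, ← ofReal_cos, ← ofReal_sin]
  simp only [mul_re, mul_im, add_re, add_im, ofReal_re, ofReal_im, I_re, I_im]
  ring

theorem hasSum_integral_exp_neg_mul_sub_mul_rpow {s x : ℝ} (hs0 : 0 < s) (hs1 : s < 1)
    (hx : 0 < x) (c : ℂ) :
    HasSum (fun n : ℕ => (-c) ^ n / n ! * ((Gamma (s * n + 1) * x ^ (-(s * n + 1)) : ℝ) : ℂ))
      (∫ r in Ioi 0, Complex.exp (-((x * r : ℝ) : ℂ) - c * ((r ^ s : ℝ) : ℂ))) := by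
  set F : ℕ → ℝ → ℂ := fun n r =>
    (-c) ^ n / n ! * ((r ^ (s * n) * exp (-(x * r)) : ℝ) : ℂ)
  have hsn (n : ℕ) : -1 < s * n := by linarith [mul_nonneg hs0.le n.cast_nonneg]
  have hF_int (n : ℕ) : Integrable (F n) (volume.restrict (Ioi 0)) :=
    (integrableOn_rpow_mul_exp_neg_mul (hsn n) hx).ofReal.const_mul _
  have hF_integral (n : ℕ) : ∫ r in Ioi 0, F n r =
      (-c) ^ n / n ! * ((Gamma (s * n + 1) * x ^ (-(s * n + 1)) : ℝ) : ℂ) := by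
    rw [integral_const_mul, integral_complex_ofReal,
      integral_rpow_mul_exp_neg_mul_Ioi_of_neg_one_lt (hsn n) hx]
  have hF_norm (n : ℕ) : ∫ r in Ioi 0, ‖F n r‖ =
      x⁻¹ * (Gamma (s * n + 1) / n ! * (‖c‖ * x ^ (-s)) ^ n) := by
    have hnorm : ∀ r ∈ Ioi (0 : ℝ),
        ‖F n r‖ = ‖c‖ ^ n / n ! * (r ^ (s * n) * exp (-(x * r))) := by
      intro r (hr : 0 < r)
      simp only [F, norm_mul, norm_div, norm_pow, norm_neg, Complex.norm_natCast,
        Complex.norm_real,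
        Real.norm_of_nonneg (by positivity : 0 ≤ r ^ (s * n) * exp (-(x * r)))]
    rw [setIntegral_congr_fun measurableSet_Ioi hnorm, integral_const_mul,
      integral_rpow_mul_exp_neg_mul_Ioi_of_neg_one_lt (hsn n) hx, rpow_neg_mul_add_one hx]
    ring
  have hF_tsum : ∀ r ∈ Ioi (0 : ℝ),
      ∑' n, F n r = Complex.exp (-((x * r : ℝ) : ℂ) - c * ((r ^ s : ℝ) : ℂ)) := by
    intro r (hr : 0 < r)
    have hexp := NormedSpace.expSeries_div_hasSum_exp (-(c * ((r ^ s : ℝ) : ℂ)))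
    rw [← Complex.exp_eq_exp_ℂ] at hexp
    rw [sub_eq_add_neg, Complex.exp_add, ← (hexp.mul_left _).tsum_eq]
    refine tsum_congr fun n => ?_
    simp only [F, rpow_mul_natCast hr.le]
    push_cast
    ring
  have hsum := hasSum_integral_of_summable_integral_norm hF_int (by
    simp_rw [hF_norm]
    exact (summable_Gamma_mul_add_one_div_factorial_mul_pow hs0 hs1 _).mul_left _)
  rwa [funext hF_integral, setIntegral_congr_fun measurableSet_Ioi hF_tsum] at hsum

theorem summable_Gamma_mul_rpow_div_factorial {s x : ℝ} (hs0 : 0 < s) (hs1 : s < 1)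
    (hx : 0 < x) : Summable fun n : ℕ => Gamma (s * n + 1) * x ^ (-(s * n + 1)) / n ! :=
  ((summable_Gamma_mul_add_one_div_factorial_mul_pow hs0 hs1 (x ^ (-s))).mul_left x⁻¹).congr
    fun n => by rw [rpow_neg_mul_add_one hx]; ring

theorem hasSum_re_I_mul_integral_exp_neg_mul_sub_exp_mul_rpow {s x : ℝ} (hs0 : 0 < s)
    (hs1 : s < 1) (hx : 0 < x) (θ : ℝ) :
    HasSum
      (fun n : ℕ => -((-1) ^ n * sin (θ * n) * Gamma (s * n + 1) / n ! * x ^ (-(s * n + 1))))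
      (Complex.I * ∫ r in Ioi 0, Complex.exp (-((x * r : ℝ) : ℂ) -
        Complex.exp (Complex.I * θ) * ((r ^ s : ℝ) : ℂ))).re := by
  refine (Complex.hasSum_re ((hasSum_integral_exp_neg_mul_sub_mul_rpow hs0 hs1 hx _).mul_left
    Complex.I)).congr_fun fun n => ?_
  rw [show Complex.I * ((-Complex.exp (Complex.I * θ)) ^ n / n ! *
      ((Gamma (s * n + 1) * x ^ (-(s * n + 1)) : ℝ) : ℂ)) =
      ((Gamma (s * n + 1) * x ^ (-(s * n + 1)) / n ! : ℝ) : ℂ) *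
      (Complex.I * (-Complex.exp (Complex.I * θ)) ^ n) by push_cast; ring,
    Complex.re_ofReal_mul, Complex.re_I_mul_neg_exp_pow]
  ring

theorem stmt_12 (s : ℝ) (hs0 : 0 < s) (hs1 : s < 1) (x : ℝ) (hx : 0 < x) :
    Summable (fun j : ℕ =>
      |(-1 : ℝ) ^ j * (Real.Gamma (s * ((j : ℝ) + 1) + 1) *
          Real.sin (Real.pi * s * ((j : ℝ) + 1)) / (Nat.factorial (j + 1) : ℝ)) *
        x ^ (-(s * ((j : ℝ) + 1) + 1))|) ∧
    (Complex.I / (Real.pi : ℂ) *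
        ∫ r in Set.Ioi (0 : ℝ),
          Complex.exp (-((x * r : ℝ) : ℂ) -
            Complex.exp (Complex.I * (Real.pi : ℂ) * (s : ℂ)) * ((r ^ s : ℝ) : ℂ))).re
      = (1 / Real.pi) *
        ∑' j : ℕ, (-1 : ℝ) ^ j * (Real.Gamma (s * ((j : ℝ) + 1) + 1) *
            Real.sin (Real.pi * s * ((j : ℝ) + 1)) / (Nat.factorial (j + 1) : ℝ)) *
          x ^ (-(s * ((j : ℝ) + 1) + 1)) := by
  have h := hasSum_re_I_mul_integral_exp_neg_mul_sub_exp_mul_rpow hs0 hs1 hx (π * s)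
  rw [← hasSum_nat_add_iff' 1] at h
  simp only [Finset.sum_range_one, Nat.cast_zero, mul_zero, sin_zero, zero_mul, zero_div,
    neg_zero, sub_zero] at h
  have hT := h.congr_fun fun j => show (-1 : ℝ) ^ j * (Gamma (s * ((j : ℝ) + 1) + 1) *
      sin (π * s * ((j : ℝ) + 1)) / ((j + 1)! : ℝ)) * x ^ (-(s * ((j : ℝ) + 1) + 1)) = _ by
    push_cast; ring
  refine ⟨((summable_nat_add_iff 1).2 (summable_Gamma_mul_rpow_div_factorial hs0 hs1 hx)
    |>.of_nonneg_of_le (fun j => abs_nonneg _) fun j => ?_), ?_⟩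
  · push_cast
    rw [abs_mul, abs_mul, abs_neg_one_pow, one_mul, abs_of_pos (rpow_pos_of_pos hx _), abs_div,
      abs_mul, abs_of_pos (by positivity), Nat.abs_cast]
    calc _ = Gamma (s * ((j : ℝ) + 1) + 1) * x ^ (-(s * ((j : ℝ) + 1) + 1)) / (j + 1)! *
          |sin (π * s * ((j : ℝ) + 1))| := by ring
      _ ≤ _ := mul_le_of_le_one_right (by positivity) (abs_sin_le_one _)
  · rw [show Complex.I * π * s = Complex.I * ((π * s : ℝ) : ℂ) by push_cast; ring,
      div_mul_eq_mul_div, Complex.div_ofReal_re, hT.tsum_eq]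
    ring
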